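/- arXiv:2110.09701 — 3 statements merged into one kernel-verified Lean document; each statement's English description precedes it below -/
import Mathlib

section
/- Let p, q ≥ 2 and n ≥ 1 be integers. Then T_n contains a subsemigroup isomorphic to the p×q rectangular band if and only if there exists an integer r ≥ 2 such that r + l ≤ n and π_r(n − l) ≥ q, where l is the least nonnegative integer with r^l ≥ p. Consequently, the minimum transformation degree of a p×q rectangular band equals the minimum over r ≥ 2 of the least n with π_r(n − ⌈log_r p⌉) ≥ q. -/
/-- Multiplication of the full transformation semigroup: `(f * g) x = g (f x)`. -/
def tMul {n : ℕ} (f g : Fin n → Fin n) : Fin n → Fin n := fun x => g (f x)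

/-- `piComp r n` is `π_r(n)`: the maximum of `s₁ ⋯ s_r` over all compositions
`(s₁, …, s_r)` of `n` of length `r` into positive parts. -/
noncomputable def piComp (r n : ℕ) : ℕ :=
  sSup {m | ∃ s : Fin r → ℕ, (∀ i, 1 ≤ s i) ∧ (∑ i, s i) = n ∧ m = ∏ i, s i}

/-!
Fix a row `a₀` of an injective representation on `X`, `|X| = n`. The trace of a point `x` under a
row `a` is `b ↦ (a, b) x`; every row has the same set `T` of traces, say `r` of them. The points
whose trace does not depend on the row form the core, which splits into `r` nonempty blocks, one
per trace. A column is determined by the point it picks in each block, so `q ≤ ∏ |block|`; a row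
is determined by the traces it gives to the points outside the core, so `p ≤ r ^ (n - |core|)`.
Hence `⌈log_r p⌉ ≤ n - |core|`, and enlarging one block yields a composition of
`n - ⌈log_r p⌉` with product at least `q`.

Conversely, from such a composition `s`, take `⌈log_r p⌉` digit points and blocks of sizes `s i`:
row `a` labels the digit points by the base-`r` digits of `a` and each block by its own index,
and `(a, b)` sends a point to the point that `b` picks in the block of its label.
-/

open Function Fintype

lemma sInf_setOf_le_pow_eq_clog {b : ℕ} (hb : 1 < b) (p : ℕ) :
    sInf {m | p ≤ b ^ m} = Nat.clog b p := by
  have : {m | p ≤ b ^ m} = Set.Ici (Nat.clog b p) :=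
    Set.ext fun _ => (Nat.clog_le_iff_le_pow hb).symm
  rw [this, csInf_Ici]

section piComp

lemma piComp_bddAbove (r n : ℕ) :
    BddAbove {m | ∃ s : Fin r → ℕ, (∀ i, 1 ≤ s i) ∧ (∑ i, s i) = n ∧ m = ∏ i, s i} := by
  refine ⟨n ^ r, ?_⟩
  rintro _ ⟨s, -, rfl, rfl⟩
  calc ∏ i, s i ≤ ∏ _i : Fin r, ∑ j, s j :=
        Finset.prod_le_prod' fun i _ => Finset.single_le_sum (fun j _ => Nat.zero_le _)
          (Finset.mem_univ i)
    _ = (∑ j, s j) ^ r := by simp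

-- Enlarge one part so that the parts sum to `n`.
lemma prod_le_piComp {ι : Type*} [Fintype ι] [Nonempty ι] {n : ℕ} (s : ι → ℕ)
    (hs : ∀ i, 1 ≤ s i) (hsum : ∑ i, s i ≤ n) : ∏ i, s i ≤ piComp (card ι) n := by
  classical
  obtain ⟨i₀⟩ := ‹Nonempty ι›
  set t := s + Pi.single i₀ (n - ∑ i, s i)
  have hst : ∀ i, s i ≤ t i := fun i => Nat.le_add_right _ _
  have ht : ∑ i, t i = n := by
    simp only [t, Pi.add_apply, Finset.sum_add_distrib, Finset.sum_pi_single', Finset.mem_univ,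
      if_true]
    omega
  let e := equivFin ι
  calc ∏ i, s i ≤ ∏ i, t i := Finset.prod_le_prod' fun i _ => hst i
    _ = ∏ i, t (e.symm i) := (e.symm.prod_comp t).symm
    _ ≤ piComp (card ι) n :=
        le_csSup (piComp_bddAbove _ _)
          ⟨t ∘ e.symm, fun i => (hs _).trans (hst _), by rw [← ht]; exact e.symm.sum_comp t, rfl⟩

lemma exists_of_le_piComp {q r n : ℕ} (hq : 1 ≤ q) (h : q ≤ piComp r n) :
    ∃ s : Fin r → ℕ, (∀ i, 1 ≤ s i) ∧ (∑ i, s i) = n ∧ q ≤ ∏ i, s i := by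
  have hne : {m | ∃ s : Fin r → ℕ, (∀ i, 1 ≤ s i) ∧ (∑ i, s i) = n ∧ m = ∏ i, s i}.Nonempty := by
    by_contra hempty
    rw [Set.not_nonempty_iff_eq_empty] at hempty
    rw [piComp, hempty, csSup_empty, bot_eq_zero] at h
    omega
  obtain ⟨s, hs, hsum, hprod⟩ := Nat.sSup_mem hne (piComp_bddAbove r n)
  exact ⟨s, hs, hsum, hprod ▸ h⟩

lemma le_of_piComp_pos {r n : ℕ} (h : 0 < piComp r n) : r ≤ n := by
  obtain ⟨s, hs, rfl, -⟩ := exists_of_le_piComp h le_rfl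
  simpa using Finset.sum_le_sum fun i (_ : i ∈ Finset.univ) => hs i

end piComp

-- Transformations compose left to right, as in `tMul`.
def IsRectangularBandRep {A B X : Type*} (φ : A × B → X → X) : Prop :=
  ∀ x y : A × B, φ (x.1, y.2) = φ y ∘ φ x

namespace IsRectangularBandRep

variable {A B X : Type*} {φ : A × B → X → X}

lemma conj {Y : Type*} (hφ : IsRectangularBandRep φ) (e : X ≃ Y) :
    IsRectangularBandRep (e.conj ∘ φ) := fun x y => by
  simp only [comp_apply, hφ x y, Equiv.conj_comp]

section Construction

variable {L ι : Type*} {F : ι → Type*}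

def blockRep (dig : A → L → ι) (col : B → ∀ i, F i) (ab : A × B)
    (x : L ⊕ Σ i, F i) : L ⊕ Σ i, F i :=
  let i := Sum.elim (dig ab.1) Sigma.fst x
  Sum.inr ⟨i, col ab.2 i⟩

lemma blockRep_isRectangularBandRep (dig : A → L → ι) (col : B → ∀ i, F i) :
    IsRectangularBandRep (blockRep dig col) :=
  fun _ _ => rfl

lemma blockRep_injective [∀ i, Nonempty (F i)] {dig : A → L → ι} {col : B → ∀ i, F i}
    (hdig : Injective dig) (hcol : Injective col) : Injective (blockRep dig col) := by
  rintro ⟨a, b⟩ ⟨a', b'⟩ h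
  have ha : dig a = dig a' := funext fun j =>
    congrArg Sigma.fst (Sum.inr_injective (congrFun h (Sum.inl j)))
  have hb : col b = col b' := funext fun i =>
    eq_of_heq (Sigma.mk.inj_iff.mp (Sum.inr_injective
      (congrFun h (Sum.inr ⟨i, Classical.arbitrary _⟩)))).2
  rw [hdig ha, hcol hb]

end Construction

section Traces

variable (φ) in
def trace (a : A) (x : X) : B → X := fun b => φ (a, b) x

variable (φ) in
def core : Set X := {x | ∀ a a', trace φ a x = trace φ a' x}

variable (φ) in
def coreTrace (a₀ : A) (x : core φ) : Set.range (trace φ a₀) := ⟨trace φ a₀ x, x, rfl⟩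

lemma card_core_eq_sum [Finite X] (a₀ : A) [Fintype (Set.range (trace φ a₀))] :
    Nat.card (core φ) = ∑ τ, Nat.card {x // coreTrace φ a₀ x = τ} := by
  rw [← Nat.card_sigma]
  exact Nat.card_congr (Equiv.sigmaFiberEquiv _).symm

lemma eq_of_trace_eq [Nonempty B] (hinj : Injective φ) {a a' : A}
    (h : ∀ x, trace φ a x = trace φ a' x) : a = a' :=
  congrArg Prod.fst (hinj (funext fun x => congrFun (h x) (Classical.arbitrary B)))

variable (hφ : IsRectangularBandRep φ)
include hφ

lemma trace_apply (a c : A) (b : B) (x : X) : trace φ a (φ (c, b) x) = trace φ c x :=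
  funext fun d => (congrFun (hφ (c, b) (a, d)) x).symm

lemma apply_mem_core (c : A) (b : B) (x : X) : φ (c, b) x ∈ core φ := fun a a' => by
  rw [hφ.trace_apply, hφ.trace_apply]

lemma trace_mem_range [Nonempty B] (a₀ a : A) (x : X) :
    trace φ a x ∈ Set.range (trace φ a₀) :=
  ⟨φ (a, Classical.arbitrary B) x, hφ.trace_apply _ _ _ _⟩

lemma trace_eval_of_mem_range {a₀ : A} {τ : B → X} (hτ : τ ∈ Set.range (trace φ a₀))
    (a : A) (b : B) : trace φ a (τ b) = τ := by
  obtain ⟨y, rfl⟩ := hτ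
  exact hφ.trace_apply _ _ _ _

lemma eval_mem_core {a₀ : A} {τ : B → X} (hτ : τ ∈ Set.range (trace φ a₀)) (b : B) :
    τ b ∈ core φ := fun a a' => by
  rw [hφ.trace_eval_of_mem_range hτ, hφ.trace_eval_of_mem_range hτ]

lemma coreTrace_surjective [Nonempty B] (a₀ : A) : Surjective (coreTrace φ a₀) := by
  rintro ⟨_, y, rfl⟩
  exact ⟨⟨_, hφ.apply_mem_core a₀ (Classical.arbitrary B) y⟩, Subtype.ext (hφ.trace_apply _ _ _ _)⟩

lemma card_le_prod_card_fiber [Finite X] (hinj : Injective φ) (a₀ : A)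
    [Fintype (Set.range (trace φ a₀))] :
    Nat.card B ≤ ∏ τ, Nat.card {x // coreTrace φ a₀ x = τ} := by
  rw [← Nat.card_pi]
  refine Nat.card_le_card_of_injective (fun b τ => ⟨⟨τ.1 b, hφ.eval_mem_core τ.2 b⟩,
    Subtype.ext (hφ.trace_eval_of_mem_range τ.2 a₀ b)⟩) fun b b' h => ?_
  have : φ (a₀, b) = φ (a₀, b') :=
    funext fun y => congrArg (fun g => (g ⟨_, y, rfl⟩).1.1) h
  exact congrArg Prod.snd (hinj this)

lemma card_le_card_range_pow [Nonempty B] [Finite B] [Finite X] (hinj : Injective φ) (a₀ : A) :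
    Nat.card A ≤ Nat.card (Set.range (trace φ a₀)) ^ Nat.card ↥(core φ)ᶜ := by
  rw [← Nat.card_fun]
  refine Nat.card_le_card_of_injective (fun a (x : ↥(core φ)ᶜ) =>
    (⟨trace φ a x, hφ.trace_mem_range a₀ a x⟩ : Set.range (trace φ a₀))) fun a a' h => ?_
  refine eq_of_trace_eq hinj fun x => ?_
  by_cases hx : x ∈ core φ
  · exact hx a a'
  · exact congrArg Subtype.val (congrFun h ⟨x, hx⟩)

lemma two_le_card_range [Nontrivial A] [Nonempty B] [Finite B] [Finite X] (hinj : Injective φ)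
    (a₀ : A) : 2 ≤ Nat.card (Set.range (trace φ a₀)) := by
  by_contra! h
  have := Finite.card_le_one_iff_subsingleton.mp (Nat.le_of_lt_succ h)
  obtain ⟨a, a', hne⟩ := exists_pair_ne A
  exact hne (eq_of_trace_eq hinj fun x => congrArg Subtype.val
    (Subsingleton.elim (⟨_, hφ.trace_mem_range a₀ a x⟩ : Set.range (trace φ a₀))
      ⟨_, hφ.trace_mem_range a₀ a' x⟩))

end Traces

end IsRectangularBandRep

section Criterion

open IsRectangularBandRep

variable {A B X : Type*} [Finite B] [Finite X] [Nonempty B]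

theorem IsRectangularBandRep.exists_le_piComp [Nontrivial A] {φ : A × B → X → X}
    (hφ : IsRectangularBandRep φ) (hinj : Injective φ) :
    ∃ r, 2 ≤ r ∧ r + Nat.clog r (Nat.card A) ≤ Nat.card X ∧
      Nat.card B ≤ piComp r (Nat.card X - Nat.clog r (Nat.card A)) := by
  obtain ⟨a₀⟩ := (inferInstance : Nonempty A)
  set T := Set.range (trace φ a₀)
  let _ := Fintype.ofFinite T
  set s : T → ℕ := fun τ => Nat.card {x // coreTrace φ a₀ x = τ}
  have hs : ∀ τ, 1 ≤ s τ := fun τ => by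
    obtain ⟨x, hx⟩ := hφ.coreTrace_surjective a₀ τ
    have : Nonempty {x // coreTrace φ a₀ x = τ} := ⟨⟨x, hx⟩⟩
    exact Nat.card_pos
  have hT : 2 ≤ Nat.card T := hφ.two_le_card_range hinj a₀
  have hcore : Nat.card (core φ) = ∑ τ, s τ := card_core_eq_sum a₀
  have hcompl : Nat.card ↥(core φ)ᶜ = Nat.card X - Nat.card (core φ) := by
    simp only [Nat.card_coe_set_eq]
    exact Set.ncard_compl _
  have hl : Nat.clog (Nat.card T) (Nat.card A) ≤ Nat.card X - Nat.card (core φ) :=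
    Nat.clog_le_of_le_pow (hcompl ▸ hφ.card_le_card_range_pow hinj a₀)
  have hTs : Nat.card T ≤ ∑ τ, s τ := by
    simpa [Nat.card_eq_fintype_card] using Finset.sum_le_sum fun τ (_ : τ ∈ Finset.univ) => hs τ
  have hcoreX : Nat.card (core φ) ≤ Nat.card X := Finite.card_subtype_le _
  have : Nonempty T := Finite.card_pos_iff.mp (by omega)
  have hprod := prod_le_piComp s hs (n := Nat.card X - Nat.clog (Nat.card T) (Nat.card A))
    (by omega)
  rw [← Nat.card_eq_fintype_card] at hprod
  exact ⟨Nat.card T, hT, by omega, (hφ.card_le_prod_card_fiber hinj a₀).trans hprod⟩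

theorem exists_isRectangularBandRep_of_le_piComp [Finite A] {r : ℕ} (hr : 1 < r)
    (h : Nat.card B ≤ piComp r (Nat.card X - Nat.clog r (Nat.card A))) :
    ∃ φ : A × B → X → X, Injective φ ∧ IsRectangularBandRep φ := by
  let _ := Fintype.ofFinite A
  let _ := Fintype.ofFinite B
  set l := Nat.clog r (Nat.card A)
  obtain ⟨s, hs, hsum, hprod⟩ := exists_of_le_piComp Nat.card_pos h
  have hrl : r ≤ Nat.card X - l := le_of_piComp_pos (Nat.card_pos.trans_le h)
  have hpow : Nat.card A ≤ r ^ l := Nat.le_pow_clog hr _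
  obtain ⟨dig⟩ : Nonempty (A ↪ (Fin l → Fin r)) := Embedding.nonempty_of_card_le <| by
    simpa [Nat.card_eq_fintype_card] using hpow
  obtain ⟨col⟩ : Nonempty (B ↪ ∀ i, Fin (s i)) := Embedding.nonempty_of_card_le <| by
    simpa [Nat.card_eq_fintype_card] using hprod
  have : ∀ i, Nonempty (Fin (s i)) := fun i => ⟨⟨0, hs i⟩⟩
  obtain ⟨e⟩ : Nonempty ((Fin l ⊕ Σ i, Fin (s i)) ≃ X) := Finite.card_eq.mp <| by
    rw [Nat.card_sum, Nat.card_sigma]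
    simp only [Nat.card_eq_fintype_card, Fintype.card_fin] at hsum ⊢
    omega
  exact ⟨e.conj ∘ blockRep dig col, e.conj.injective.comp (blockRep_injective dig.injective
    col.injective), (blockRep_isRectangularBandRep dig col).conj e⟩

theorem exists_isRectangularBandRep_iff [Finite A] [Nontrivial A] :
    (∃ φ : A × B → X → X, Injective φ ∧ IsRectangularBandRep φ) ↔
      ∃ r, 2 ≤ r ∧ r + Nat.clog r (Nat.card A) ≤ Nat.card X ∧
        Nat.card B ≤ piComp r (Nat.card X - Nat.clog r (Nat.card A)) :=
  ⟨fun ⟨_, hinj, hφ⟩ => hφ.exists_le_piComp hinj,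
    fun ⟨_, hr, _, h⟩ => exists_isRectangularBandRep_of_le_piComp hr h⟩

end Criterion

theorem rectangular_band_degree_general (p q n : ℕ) (hp : 2 ≤ p) (hq : 2 ≤ q) :
    ((∃ φ : Fin p × Fin q → (Fin n → Fin n), Function.Injective φ ∧
        ∀ x y : Fin p × Fin q, φ (x.1, y.2) = tMul (φ x) (φ y))
      ↔ ∃ r, 2 ≤ r ∧ r + sInf {m | p ≤ r ^ m} ≤ n ∧
          q ≤ piComp r (n - sInf {m | p ≤ r ^ m})) ∧
    sInf {m | 1 ≤ m ∧ ∃ φ : Fin p × Fin q → (Fin m → Fin m), Function.Injective φ ∧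
        ∀ x y : Fin p × Fin q, φ (x.1, y.2) = tMul (φ x) (φ y)}
      = sInf {m | ∃ r, 2 ≤ r ∧ q ≤ piComp r (m - sInf {k | p ≤ r ^ k})} := by
  have : Nontrivial (Fin p) := Fin.nontrivial_iff_two_le.mpr hp
  have : Nonempty (Fin q) := ⟨⟨0, by omega⟩⟩
  have hband (m : ℕ) : (∃ φ : Fin p × Fin q → (Fin m → Fin m), Injective φ ∧
      ∀ x y : Fin p × Fin q, φ (x.1, y.2) = tMul (φ x) (φ y)) ↔
      ∃ r, 2 ≤ r ∧ r + sInf {k | p ≤ r ^ k} ≤ m ∧ q ≤ piComp r (m - sInf {k | p ≤ r ^ k}) := by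
    refine exists_isRectangularBandRep_iff.trans
      (exists_congr fun r => and_congr_right fun hr => ?_)
    simp only [Nat.card_eq_fintype_card, Fintype.card_fin, sInf_setOf_le_pow_eq_clog hr]
  refine ⟨hband n, congrArg sInf (Set.ext fun m => ?_)⟩
  rw [Set.mem_ofPred_eq, Set.mem_ofPred_eq, hband m]
  constructor
  · rintro ⟨-, r, hr, -, h⟩
    exact ⟨r, hr, h⟩
  · rintro ⟨r, hr, h⟩
    have := le_of_piComp_pos (by omega : 0 < piComp r (m - sInf {k | p ≤ r ^ k}))
    exact ⟨by omega, r, hr, by omega, h⟩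

/-- For `p, q ≥ 2`: `T_n` contains a `p × q` rectangular band iff there is `r ≥ 2` with
`r + l_r ≤ n` and `π_r(n - l_r) ≥ q`, where `l_r = ⌈log_r p⌉` is the least `l` with
`r^l ≥ p`.  Consequently, the minimum transformation degree of a `p × q` rectangular band
equals the minimum over `r ≥ 2` of the least `n` with `π_r(n - ⌈log_r p⌉) ≥ q`. -/
theorem rectangular_band_degree (p q n : ℕ) (hp : 2 ≤ p) (hq : 2 ≤ q) (hn : 1 ≤ n) :
    ((∃ φ : Fin p × Fin q → (Fin n → Fin n), Function.Injective φ ∧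
        ∀ x y : Fin p × Fin q, φ (x.1, y.2) = tMul (φ x) (φ y))
      ↔ ∃ r, 2 ≤ r ∧ r + sInf {m | p ≤ r ^ m} ≤ n ∧
          q ≤ piComp r (n - sInf {m | p ≤ r ^ m})) ∧
    sInf {m | 1 ≤ m ∧ ∃ φ : Fin p × Fin q → (Fin m → Fin m), Function.Injective φ ∧
        ∀ x y : Fin p × Fin q, φ (x.1, y.2) = tMul (φ x) (φ y)}
      = sInf {m | ∃ r, 2 ≤ r ∧ q ≤ piComp r (m - sInf {k | p ≤ r ^ k})} :=
  rectangular_band_degree_general p q n hp hq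
end

section
/- If S is a null semigroup of finite cardinality p ≥ 1, then the minimum transformation degree of S equals the least n ≥ 1 with ξ(n) ≥ p. Equivalently, T_n contains a null subsemigroup of cardinality p if and only if ξ(n) ≥ p. -/
/-- `xiFun n` is `ξ(n) = max { t^(n-t) : 1 ≤ t ≤ n }`. -/
def xiFun (n : ℕ) : ℕ := (Finset.Icc 1 n).sup fun t => t ^ (n - t)

def IsNullFamily {α : Type*} (T : Finset (α → α)) : Prop :=
  ∃ w ∈ T, ∀ f ∈ T, ∀ g ∈ T, g ∘ f = w

open Finset

theorem pow_le_xiFun {t n : ℕ} (ht : 1 ≤ t) (htn : t ≤ n) : t ^ (n - t) ≤ xiFun n :=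
  le_sup (f := fun t => t ^ (n - t)) (mem_Icc.mpr ⟨ht, htn⟩)

theorem exists_pow_eq_xiFun {n : ℕ} (hn : 1 ≤ n) :
    ∃ t, 1 ≤ t ∧ t ≤ n ∧ t ^ (n - t) = xiFun n := by
  obtain ⟨t, ht, hsup⟩ := exists_mem_eq_sup (Icc 1 n) ⟨1, mem_Icc.mpr ⟨le_rfl, hn⟩⟩
    (fun t => t ^ (n - t))
  exact ⟨t, (mem_Icc.mp ht).1, (mem_Icc.mp ht).2, hsup.symm⟩

section NullFamily

variable {α : Type*} [Fintype α] [DecidableEq α]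

theorem card_le_pow_of_mapsTo_of_eqOn {T : Finset (α → α)} {B : Finset α} {w : α → α}
    (hmaps : ∀ f ∈ T, ∀ x, f x ∈ B) (heq : ∀ f ∈ T, ∀ y ∈ B, f y = w y) :
    #T ≤ #B ^ (Fintype.card α - #B) := by
  have hinj : Function.Injective
      fun (f : T) (x : {x // x ∉ B}) => (⟨f.1 x, hmaps f.1 f.2 x⟩ : B) := by
    intro f g hfg
    apply Subtype.ext
    funext x
    by_cases hx : x ∈ B
    · rw [heq f f.2 x hx, heq g g.2 x hx]
    · exact congrArg Subtype.val (congrFun hfg ⟨x, hx⟩)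
  simpa [Fintype.card_fun, Fintype.card_subtype_compl] using
    Fintype.card_le_of_injective _ hinj

theorem IsNullFamily.exists_card_le_pow [Nonempty α] {T : Finset (α → α)}
    (hT : IsNullFamily T) :
    ∃ t, 1 ≤ t ∧ t ≤ Fintype.card α ∧ #T ≤ t ^ (Fintype.card α - t) := by
  obtain ⟨w, hw, hnull⟩ := hT
  set B : Finset α := {y | ∀ g ∈ T, g y = w y}
  have hmaps : ∀ f ∈ T, ∀ x, f x ∈ B := fun f hf x => by
    simp only [B, mem_filter, mem_univ, true_and]
    exact fun g hg => (congrFun (hnull f hf g hg) x).trans (congrFun (hnull f hf w hw) x).symm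
  have heq : ∀ f ∈ T, ∀ y ∈ B, f y = w y := fun f hf y hy => (mem_filter.mp hy).2 f hf
  obtain ⟨x⟩ := ‹Nonempty α›
  exact ⟨#B, card_pos.mpr ⟨w x, hmaps w hw x⟩, card_le_univ B,
    card_le_pow_of_mapsTo_of_eqOn hmaps heq⟩

def nullFamily (B : Finset α) (b : α) : Finset (α → α) :=
  {f | (∀ x, f x ∈ B) ∧ ∀ y ∈ B, f y = b}

theorem const_mem_nullFamily {B : Finset α} {b : α} (hb : b ∈ B) :
    Function.const α b ∈ nullFamily B b := by
  simp [nullFamily, hb]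

theorem comp_eq_const_of_mem_nullFamily {B : Finset α} {b : α} {f g : α → α}
    (hf : f ∈ nullFamily B b) (hg : g ∈ nullFamily B b) : g ∘ f = Function.const α b := by
  simp only [nullFamily, mem_filter, mem_univ, true_and] at hf hg
  funext x
  exact hg.2 (f x) (hf.1 x)

theorem pow_le_card_nullFamily {B : Finset α} {b : α} (hb : b ∈ B) :
    #B ^ (Fintype.card α - #B) ≤ #(nullFamily B b) := by
  let extend : ({x // x ∉ B} → B) → α → α :=
    fun u x => if hx : x ∈ B then b else u ⟨x, hx⟩
  have hinj : Function.Injective extend := by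
    intro u v huv
    funext x
    apply Subtype.ext
    simpa [extend, x.2] using congrFun huv x.1
  have hmem : ∀ u ∈ (univ : Finset _), extend u ∈ nullFamily B b := by
    intro u _
    simp only [nullFamily, mem_filter, mem_univ, true_and, extend]
    refine ⟨fun x => ?_, fun y hy => dif_pos hy⟩
    split_ifs
    exacts [hb, (u _).2]
  simpa [Fintype.card_fun, Fintype.card_subtype_compl] using
    card_le_card_of_injOn extend hmem hinj.injOn

theorem exists_isNullFamily_card_eq {t p : ℕ} (ht : 1 ≤ t) (htα : t ≤ Fintype.card α)
    (hp : 1 ≤ p) (hpt : p ≤ t ^ (Fintype.card α - t)) :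
    ∃ T : Finset (α → α), #T = p ∧ IsNullFamily T := by
  obtain ⟨B, -, hB⟩ := exists_subset_card_eq (s := (univ : Finset α)) htα
  obtain ⟨b, hb⟩ := card_pos.mp (hB ▸ ht : 0 < #B)
  have hsub : {Function.const α b} ⊆ nullFamily B b :=
    singleton_subset_iff.mpr (const_mem_nullFamily hb)
  obtain ⟨T, hbT, hT, hTp⟩ := exists_subsuperset_card_eq hsub (by simpa using hp)
    (hpt.trans (hB ▸ pow_le_card_nullFamily hb))
  exact ⟨T, hTp, Function.const α b, singleton_subset_iff.mp hbT,
    fun f hf g hg => comp_eq_const_of_mem_nullFamily (hT hf) (hT hg)⟩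

end NullFamily

theorem exists_isNullFamily_card_eq_iff {n p : ℕ} (hn : 1 ≤ n) (hp : 1 ≤ p) :
    (∃ T : Finset (Fin n → Fin n), #T = p ∧ IsNullFamily T) ↔ p ≤ xiFun n := by
  have : Nonempty (Fin n) := ⟨⟨0, hn⟩⟩
  constructor
  · rintro ⟨T, rfl, hT⟩
    obtain ⟨t, ht, htn, hTt⟩ := hT.exists_card_le_pow
    rw [Fintype.card_fin] at htn hTt
    exact hTt.trans (pow_le_xiFun ht htn)
  · intro hpn
    obtain ⟨t, ht, htn, htξ⟩ := exists_pow_eq_xiFun hn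
    exact exists_isNullFamily_card_eq ht (by simpa using htn) hp (by simpa [htξ] using hpn)

theorem exists_injective_hom_iff_isNullFamily {S α : Type*} [Fintype S] (mul : S → S → S)
    {z : S} (hz : ∀ x y, mul x y = z) :
    (∃ φ : S → α → α, Function.Injective φ ∧ ∀ x y, φ (mul x y) = φ y ∘ φ x) ↔
      ∃ T : Finset (α → α), #T = Fintype.card S ∧ IsNullFamily T := by
  classical
  constructor
  · rintro ⟨φ, hinj, hhom⟩
    refine ⟨univ.image φ, by rw [card_image_of_injective _ hinj, card_univ], φ z,
      mem_image_of_mem φ (mem_univ z), ?_⟩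
    simp only [mem_image, mem_univ, true_and]
    rintro _ ⟨x, rfl⟩ _ ⟨y, rfl⟩
    rw [← hhom, hz]
  · rintro ⟨T, hT, w, hw, hnull⟩
    let e : S ≃ T := (Fintype.equivOfCardEq (by simp [hT])).trans
      (Equiv.swap (Fintype.equivOfCardEq (by simp [hT]) z) ⟨w, hw⟩)
    have hez : (e z : α → α) = w := by simp [e]
    refine ⟨fun s => e s, Subtype.val_injective.comp e.injective, fun x y => ?_⟩
    simp only [hz, hez, hnull _ (e x).2 _ (e y).2]

/-- If `S` is a null semigroup of cardinality `p ≥ 1` (with multiplication `mul` constantly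
equal to a zero `z`), then its minimum transformation degree equals the least `n ≥ 1` with
`ξ(n) ≥ p`.  Equivalently, `T_n` contains a null subsemigroup of cardinality `p` iff
`ξ(n) ≥ p`. -/
theorem null_semigroup_degree (S : Type) [Fintype S] (mul : S → S → S) (z : S)
    (hz : ∀ x y, mul x y = z) (p : ℕ) (hp : 1 ≤ p) (hcard : Fintype.card S = p) :
    sInf {n | 1 ≤ n ∧ ∃ φ : S → (Fin n → Fin n), Function.Injective φ ∧
        ∀ x y, φ (mul x y) = tMul (φ x) (φ y)}
      = sInf {n | 1 ≤ n ∧ p ≤ xiFun n} ∧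
    ∀ n, 1 ≤ n →
      ((∃ T : Finset (Fin n → Fin n), T.card = p ∧
          ∃ w ∈ T, ∀ f ∈ T, ∀ g ∈ T, tMul f g = w)
        ↔ p ≤ xiFun n) := by
  have hnull : ∀ n, 1 ≤ n →
      ((∃ T : Finset (Fin n → Fin n), #T = p ∧ IsNullFamily T) ↔ p ≤ xiFun n) :=
    fun n hn => exists_isNullFamily_card_eq_iff hn hp
  refine ⟨congrArg sInf (Set.ext fun n => and_congr_right fun hn => ?_), hnull⟩
  subst hcard
  exact (exists_injective_hom_iff_isNullFamily mul hz).trans (hnull n hn)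
end

section
/- Let n ≥ 2 and let a ∈ T_n have rank 1. Then the minimum transformation degree of the variant T_n^a equals min{2A + 3B + C + D : A, B, C, D integers, 0 ≤ A ≤ 2, B ≥ 0, D ≥ 0, C ≥ 2, 2^A·3^B·C ≥ n, and C^D ≥ n^{n−1}}. -/
/-- The rank of a transformation: the cardinality of its image. -/
def trank {n : ℕ} (f : Fin n → Fin n) : ℕ := (Finset.univ.image f).card

/-- The minimum transformation degree of the variant `T_n^a` (operation
`f ⋆ g = fun x => g (a (f x))`): the least `m ≥ 1` such that there is an injective
semigroup homomorphism from `T_n^a` into `T_m`. -/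
noncomputable def variantDegree (n : ℕ) (a : Fin n → Fin n) : ℕ :=
  sInf {m | 1 ≤ m ∧ ∃ φ : (Fin n → Fin n) → (Fin m → Fin m), Function.Injective φ ∧
      ∀ f g : Fin n → Fin n, φ (fun x => g (a (f x))) = tMul (φ f) (φ g)}

/-!
Since `a` is the constant map with value `c`, the variant product is `f ⋆ g = fun _ => g c`.
Given an embedding `φ` of `T_n^a` into `T_Ω`, split `Ω` into the components of the relation
`t ~ φ f t`. Every `φ (fun _ => u)` is constant on a component, and every `φ g` is constant on the
core of a component (its image under all the `φ f`). Hence constant maps are determined by their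
values on the cores and maps fixing `c` by their values on the remaining points, so with `s q` the
size of the `q`-th core and `d q` the number of the remaining points of the component,
`n ≤ ∏ s q`, `n ^ (n - 1) ≤ ∏ s q ^ d q` and `∑ (s q + d q) = |Ω|`. Conversely, components of any
such sizes carry an embedding. Optimizing the cost, the largest core plays the role of `C` and the
other cores can be replaced by cores of size `2` and `3`.
-/

open Function

section Arithmetic

lemma exists_le_two_pow_mul_three_pow (s : ℕ) :
    ∃ A B : ℕ, 2 * A + 3 * B ≤ s ∧ s ≤ 2 ^ A * 3 ^ B := by
  induction s using Nat.strong_induction_on with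
  | _ s ih =>
    match s, ih with
    | 0, _ | 1, _ => exact ⟨0, 0, by norm_num, by norm_num⟩
    | 2, _ => exact ⟨1, 0, by norm_num, by norm_num⟩
    | 3, _ => exact ⟨0, 1, by norm_num, by norm_num⟩
    | 4, _ => exact ⟨2, 0, by norm_num, by norm_num⟩
    | 5, _ => exact ⟨1, 1, by norm_num, by norm_num⟩
    | s + 6, ih =>
      obtain ⟨A, B, hcost, hle⟩ := ih (s + 3) (by omega)
      refine ⟨A, B + 1, by omega, ?_⟩
      rw [pow_succ, ← mul_assoc]
      omega

/-- Three factors `2` cost as much as two factors `3` but give less. -/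
lemma exists_two_exponent_le_two (A B : ℕ) :
    ∃ A' B' : ℕ, A' ≤ 2 ∧ 2 * A' + 3 * B' ≤ 2 * A + 3 * B ∧ 2 ^ A * 3 ^ B ≤ 2 ^ A' * 3 ^ B' := by
  refine ⟨A % 3, B + 2 * (A / 3), by omega, by omega, ?_⟩
  calc 2 ^ A * 3 ^ B = 2 ^ (A % 3) * 8 ^ (A / 3) * 3 ^ B := by
        conv_lhs => rw [← Nat.mod_add_div A 3, pow_add, pow_mul]
        norm_num
    _ ≤ 2 ^ (A % 3) * 9 ^ (A / 3) * 3 ^ B := by gcongr; norm_num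
    _ = 2 ^ (A % 3) * 3 ^ (B + 2 * (A / 3)) := by rw [pow_add, pow_mul]; ring

lemma exists_prod_le_two_pow_mul_three_pow {ι : Type*} (t : Finset ι) (s : ι → ℕ) :
    ∃ A B : ℕ, A ≤ 2 ∧ 2 * A + 3 * B ≤ ∑ q ∈ t, s q ∧ ∏ q ∈ t, s q ≤ 2 ^ A * 3 ^ B := by
  choose A B hcost hle using fun q => exists_le_two_pow_mul_three_pow (s q)
  obtain ⟨A', B', hA', hcost', hle'⟩ :=
    exists_two_exponent_le_two (∑ q ∈ t, A q) (∑ q ∈ t, B q)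
  refine ⟨A', B', hA', ?_, ?_⟩
  · calc 2 * A' + 3 * B' ≤ 2 * ∑ q ∈ t, A q + 3 * ∑ q ∈ t, B q := hcost'
      _ = ∑ q ∈ t, (2 * A q + 3 * B q) := by
        rw [Finset.sum_add_distrib, Finset.mul_sum, Finset.mul_sum]
      _ ≤ ∑ q ∈ t, s q := Finset.sum_le_sum fun q _ => hcost q
  · calc ∏ q ∈ t, s q ≤ ∏ q ∈ t, 2 ^ A q * 3 ^ B q := Finset.prod_le_prod' fun q _ => hle q
      _ = (2 ^ ∑ q ∈ t, A q) * 3 ^ ∑ q ∈ t, B q := by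
        rw [Finset.prod_mul_distrib, Finset.prod_pow_eq_pow_sum, Finset.prod_pow_eq_pow_sum]
      _ ≤ 2 ^ A' * 3 ^ B' := hle'

lemma exists_cost_le_sum {ι : Type*} [Fintype ι] {N M : ℕ} (hN : 2 ≤ N) (s d : ι → ℕ)
    (hprod : N ≤ ∏ q, s q) (hpow : M ≤ ∏ q, s q ^ d q) :
    ∃ A B C D : ℕ, A ≤ 2 ∧ 2 ≤ C ∧ N ≤ 2 ^ A * 3 ^ B * C ∧ M ≤ C ^ D ∧
      2 * A + 3 * B + C + D ≤ ∑ q, (s q + d q) := by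
  classical
  have : Nonempty ι := by
    by_contra h
    rw [not_nonempty_iff] at h
    rw [Finset.univ_eq_empty, Finset.prod_empty] at hprod
    omega
  obtain ⟨q₀, hq₀⟩ := Finite.exists_max s
  have hC : 2 ≤ s q₀ := by
    by_contra! h
    have : ∏ q, s q ≤ 1 := Finset.prod_le_one' fun q _ => by have := hq₀ q; omega
    omega
  obtain ⟨A, B, hA, hcost, hle⟩ := exists_prod_le_two_pow_mul_three_pow (Finset.univ.erase q₀) s
  refine ⟨A, B, s q₀, ∑ q, d q, hA, hC, ?_, ?_, ?_⟩
  · calc N ≤ ∏ q, s q := hprod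
      _ = s q₀ * ∏ q ∈ Finset.univ.erase q₀, s q :=
        (Finset.mul_prod_erase _ _ (Finset.mem_univ q₀)).symm
      _ ≤ s q₀ * (2 ^ A * 3 ^ B) := Nat.mul_le_mul_left _ hle
      _ = 2 ^ A * 3 ^ B * s q₀ := mul_comm _ _
  · calc M ≤ ∏ q, s q ^ d q := hpow
      _ ≤ ∏ q, s q₀ ^ d q := Finset.prod_le_prod' fun q _ => Nat.pow_le_pow_left (hq₀ q) _
      _ = s q₀ ^ ∑ q, d q := Finset.prod_pow_eq_pow_sum _ _ _
  · have := Finset.add_sum_erase Finset.univ s (Finset.mem_univ q₀)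
    rw [Finset.sum_add_distrib]
    omega

end Arithmetic

lemma Nat.card_fun_subtype_ne {α : Type*} [Finite α] (c : α) :
    Nat.card ({x // x ≠ c} → α) = Nat.card α ^ (Nat.card α - 1) := by
  classical
  have := Fintype.ofFinite α
  rw [Nat.card_fun, Nat.card_eq_fintype_card, Nat.card_eq_fintype_card,
    Fintype.card_subtype_compl, Fintype.card_subtype_eq]

/-- Transformations compose left to right in `T_Ω`, so its product `tMul (φ f) (φ g)` is
`φ g ∘ φ f`. -/
def IsVariantEmbedding {α Ω : Type*} (a : α → α) (φ : (α → α) → Ω → Ω) : Prop :=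
  Injective φ ∧ ∀ f g : α → α, φ (fun x => g (a (f x))) = φ g ∘ φ f

lemma variantDegree_eq_sInf (n : ℕ) (a : Fin n → Fin n) :
    variantDegree n a =
      sInf {m | 1 ≤ m ∧ ∃ φ : (Fin n → Fin n) → Fin m → Fin m, IsVariantEmbedding a φ} :=
  rfl

lemma IsVariantEmbedding.arrowCongr {α Ω Ω' : Type*} {a : α → α} {φ : (α → α) → Ω → Ω}
    (hφ : IsVariantEmbedding a φ) (e : Ω ≃ Ω') :
    IsVariantEmbedding a fun f => e.arrowCongr e (φ f) :=
  ⟨(e.arrowCongr e).injective.comp hφ.1, fun f g => by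
    simp only [hφ.2]
    exact Equiv.arrowCongr_comp e e e _ _⟩

section Upper

variable {α ι : Type*} {T E : ι → Type*}

/-- Transposing `σ (fun _ => v)` with the prescribed value `k v` fixes the codes of the constant
maps without losing injectivity on maps with the same value at `c`. -/
lemma exists_code_eq_on_const (c : α) {Y : Type*} (σ : ({x // x ≠ c} → α) ↪ Y) (k : α → Y) :
    ∃ η : (α → α) → Y, (∀ v, η (fun _ => v) = k v) ∧
      ∀ f f', f c = f' c → η f = η f' → f = f' := by
  classical
  refine ⟨fun f => Equiv.swap (σ fun _ => f c) (k (f c)) (σ fun x => f x),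
    fun v => Equiv.swap_apply_left _ _, fun f f' hc h => funext fun x => ?_⟩
  simp only [hc, EmbeddingLike.apply_eq_iff_eq] at h
  by_cases hx : x = c
  · rw [hx, hc]
  · exact congrFun h ⟨x, hx⟩

/-- On block `q`, which is `T q ⊕ E q`, the map `blockRep c code η f` sends the core `T q` to the
single point `code (f c) q` and the extra points into `T q` according to `η f q`. -/
def blockRep (c : α) (code : α → ∀ q, T q) (η : (α → α) → ∀ q, E q → T q) (f : α → α) :
    (Σ q, T q ⊕ E q) → Σ q, T q ⊕ E q :=
  fun x => ⟨x.1, .inl (Sum.elim (fun _ => code (f c) x.1) (η f x.1) x.2)⟩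

lemma isVariantEmbedding_blockRep (c : α) {code : α → ∀ q, T q} (hcode : Injective code)
    {η : (α → α) → ∀ q, E q → T q} (hconst : ∀ v, η (fun _ => v) = fun q _ => code v q)
    (hη : ∀ f f', f c = f' c → η f = η f' → f = f') :
    IsVariantEmbedding (fun _ => c) (blockRep c code η) := by
  refine ⟨fun f f' h => ?_, fun f g => funext fun ⟨q, x⟩ => ?_⟩
  · have hrep : ∀ q x, Sum.elim (fun _ => code (f c) q) (η f q) x =
        Sum.elim (fun _ => code (f' c) q) (η f' q) x := fun q x =>
      Sum.inl_injective (sigma_mk_injective (β := fun q => T q ⊕ E q) (congrFun h ⟨q, x⟩))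
    have hc : f c = f' c := hcode (funext fun q => hrep q (.inl (code (f c) q)))
    exact hη f f' hc (funext fun q => funext fun e => hrep q (.inr e))
  · cases x <;> simp [blockRep, hconst]

lemma exists_isVariantEmbedding_const_of_le_prod [Finite α] [Fintype ι] (c : α) (s d : ι → ℕ)
    (hprod : Nat.card α ≤ ∏ q, s q) (hpow : Nat.card α ^ (Nat.card α - 1) ≤ ∏ q, s q ^ d q)
    {m : ℕ} (hm : ∑ q, (s q + d q) = m) :
    ∃ φ : (α → α) → Fin m → Fin m, IsVariantEmbedding (fun _ => c) φ := by
  classical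
  have := Fintype.ofFinite α
  obtain ⟨code⟩ : Nonempty (α ↪ ∀ q, Fin (s q)) := by
    apply Function.Embedding.nonempty_of_card_le
    rw [← Nat.card_eq_fintype_card]
    simpa using hprod
  obtain ⟨σ⟩ : Nonempty (({x // x ≠ c} → α) ↪ ∀ q, Fin (d q) → Fin (s q)) := by
    apply Function.Embedding.nonempty_of_card_le
    rw [← Nat.card_eq_fintype_card, Nat.card_fun_subtype_ne]
    simpa using hpow
  obtain ⟨η, hconst, hη⟩ := exists_code_eq_on_const c σ fun v q _ => code v q
  have e : (Σ q, Fin (s q) ⊕ Fin (d q)) ≃ Fin m := Finite.equivFinOfCardEq (by simpa using hm)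
  exact ⟨_, (isVariantEmbedding_blockRep c code.injective hconst hη).arrowCongr e⟩

lemma exists_isVariantEmbedding_const [Finite α] (c : α) {A B C D : ℕ}
    (hprod : Nat.card α ≤ 2 ^ A * 3 ^ B * C) (hpow : Nat.card α ^ (Nat.card α - 1) ≤ C ^ D) :
    ∃ φ : (α → α) → Fin (2 * A + 3 * B + C + D) → Fin (2 * A + 3 * B + C + D),
      IsVariantEmbedding (fun _ => c) φ := by
  refine exists_isVariantEmbedding_const_of_le_prod c (ι := Fin A ⊕ Fin B ⊕ Unit)
    (Sum.elim (fun _ => 2) (Sum.elim (fun _ => 3) fun _ => C))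
    (Sum.elim (fun _ => 0) (Sum.elim (fun _ => 0) fun _ => D)) ?_ ?_ ?_
  · simpa [mul_assoc] using hprod
  · simpa using hpow
  · simp only [Fintype.sum_sum_type, Sum.elim_inl, Sum.elim_inr, Finset.sum_const,
      Finset.card_univ, Fintype.card_fin, Fintype.card_unit, smul_eq_mul]
    ring

end Upper

section Lower

variable {α Ω : Type*} {c : α} {φ : (α → α) → Ω → Ω}

def componentSetoid (φ : (α → α) → Ω → Ω) : Setoid Ω :=
  Relation.EqvGen.setoid fun t t' => ∃ f, φ f t = t'

abbrev Component (φ : (α → α) → Ω → Ω) : Type _ := Quotient (componentSetoid φ)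

noncomputable instance [Finite Ω] : Fintype (Component φ) := Fintype.ofFinite _

namespace Component

def block (q : Component φ) : Set Ω := {t | Quotient.mk _ t = q}

def core (q : Component φ) : Set Ω :=
  {w | ∃ f t, Quotient.mk (componentSetoid φ) t = q ∧ φ f t = w}

lemma mk_apply (f : α → α) (t : Ω) :
    Quotient.mk (componentSetoid φ) (φ f t) = Quotient.mk _ t :=
  (Quotient.sound (Relation.EqvGen.rel _ _ ⟨f, rfl⟩)).symm

lemma core_subset_block (q : Component φ) : core q ⊆ block q := by
  rintro _ ⟨f, t, rfl, rfl⟩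
  exact mk_apply f t

lemma apply_const_eq_of_mk_eq (hom : ∀ f g : α → α, φ (fun _ => g c) = φ g ∘ φ f) (u : α)
    {t t' : Ω} (h : Quotient.mk (componentSetoid φ) t = Quotient.mk _ t') :
    φ (fun _ => u) t = φ (fun _ => u) t' := by
  have htt' := Quotient.exact h
  clear h
  induction htt' with
  | rel t t' htt' =>
    obtain ⟨f, rfl⟩ := htt'
    exact congrFun (hom f fun _ => u) t
  | refl => rfl
  | symm _ _ _ ih => exact ih.symm
  | trans _ _ _ _ _ ih ih' => exact ih.trans ih'

lemma apply_eq_of_mem_core (hom : ∀ f g : α → α, φ (fun _ => g c) = φ g ∘ φ f) (g : α → α)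
    {q : Component φ} {w : Ω} (hw : w ∈ core q) : φ g w = φ (fun _ => g c) q.out := by
  obtain ⟨f, t, rfl, rfl⟩ := hw
  rw [← apply_const_eq_of_mk_eq hom (g c) (Quotient.out_eq _).symm]
  exact (congrFun (hom f g) t).symm

lemma eq_of_apply_out_eq (hom : ∀ f g : α → α, φ (fun _ => g c) = φ g ∘ φ f) (hinj : Injective φ)
    {u u' : α} (h : ∀ q : Component φ, φ (fun _ => u) q.out = φ (fun _ => u') q.out) : u = u' := by
  have : φ (fun _ => u) = φ (fun _ => u') := funext fun t => by
    have hout : Quotient.mk (componentSetoid φ) (Quotient.mk _ t).out = Quotient.mk _ t :=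
      Quotient.out_eq _
    rw [← apply_const_eq_of_mk_eq hom u hout, ← apply_const_eq_of_mk_eq hom u' hout, h]
  exact congrFun (hinj this) c

lemma eq_of_apply_eq_off_core (hom : ∀ f g : α → α, φ (fun _ => g c) = φ g ∘ φ f)
    (hinj : Injective φ) {f f' : α → α} (hc : f c = f' c)
    (h : ∀ t, t ∉ core (Quotient.mk (componentSetoid φ) t) → φ f t = φ f' t) : f = f' := by
  refine hinj (funext fun t => ?_)
  by_cases ht : t ∈ core (Quotient.mk (componentSetoid φ) t)
  · rw [apply_eq_of_mem_core hom f ht, apply_eq_of_mem_core hom f' ht, hc]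
  · exact h t ht

lemma card_le_prod_ncard_core [Finite Ω] (hom : ∀ f g : α → α, φ (fun _ => g c) = φ g ∘ φ f)
    (hinj : Injective φ) : Nat.card α ≤ ∏ q : Component φ, (core q).ncard := by
  let enc : α → ∀ q : Component φ, core q := fun u q =>
    ⟨φ (fun _ => u) q.out, fun _ => u, q.out, Quotient.out_eq q, rfl⟩
  have henc : Injective enc := fun u u' h =>
    eq_of_apply_out_eq hom hinj fun q => congrArg Subtype.val (congrFun h q)
  simpa [Nat.card_pi, Nat.card_coe_set_eq] using Nat.card_le_card_of_injective enc henc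

lemma card_pow_le_prod_ncard_core_pow [Finite α] [Finite Ω]
    (hom : ∀ f g : α → α, φ (fun _ => g c) = φ g ∘ φ f) (hinj : Injective φ) :
    Nat.card α ^ (Nat.card α - 1) ≤
      ∏ q : Component φ, (core q).ncard ^ (block q \ core q).ncard := by
  classical
  let ext : ({x // x ≠ c} → α) → α → α := fun w x => if h : x = c then c else w ⟨x, h⟩
  let enc : ({x // x ≠ c} → α) → ∀ q : Component φ, ↥(block q \ core q) → core q :=
    fun w q t => ⟨φ (ext w) t, ext w, t, t.2.1, rfl⟩
  have henc : Injective enc := fun w w' h => by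
    have hext : ext w = ext w' := eq_of_apply_eq_off_core hom hinj (by simp [ext]) fun t ht =>
      congrArg Subtype.val (congrFun (congrFun h _) ⟨t, rfl, ht⟩)
    funext x
    simpa [ext, x.2] using congrFun hext x
  have hle := Nat.card_le_card_of_injective enc henc
  rw [Nat.card_fun_subtype_ne, Nat.card_pi] at hle
  simpa only [Nat.card_fun, Nat.card_coe_set_eq] using hle

lemma sum_ncard_block [Finite Ω] : ∑ q : Component φ, (block q).ncard = Nat.card Ω := by
  rw [← Nat.card_congr (Equiv.sigmaFiberEquiv (Quotient.mk (componentSetoid φ))), Nat.card_sigma]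
  simp_rw [← Nat.card_coe_set_eq]
  rfl

end Component

lemma IsVariantEmbedding.exists_cost_le [Finite α] [Finite Ω]
    (hφ : IsVariantEmbedding (fun _ => c) φ) (hα : 2 ≤ Nat.card α) :
    ∃ A B C D : ℕ, A ≤ 2 ∧ 2 ≤ C ∧ Nat.card α ≤ 2 ^ A * 3 ^ B * C ∧
      Nat.card α ^ (Nat.card α - 1) ≤ C ^ D ∧ 2 * A + 3 * B + C + D ≤ Nat.card Ω := by
  obtain ⟨hinj, hom⟩ := hφ
  have hsplit (q : Component φ) : q.core.ncard + (q.block \ q.core).ncard = q.block.ncard := by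
    rw [add_comm]
    exact Set.ncard_sdiff_add_ncard_of_subset q.core_subset_block
  simp_rw [← Component.sum_ncard_block (φ := φ), ← hsplit]
  exact exists_cost_le_sum hα _ _ (Component.card_le_prod_ncard_core hom hinj)
    (Component.card_pow_le_prod_ncard_core_pow hom hinj)

end Lower

lemma exists_eq_const_of_trank_eq_one {n : ℕ} {a : Fin n → Fin n} (ha : trank a = 1) :
    ∃ c, a = fun _ => c := by
  obtain ⟨c, hc⟩ := Finset.card_eq_one.mp ha
  refine ⟨c, funext fun x => ?_⟩
  simpa [hc] using Finset.mem_image_of_mem a (Finset.mem_univ x)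

lemma Nat.sInf_eq_sInf_of_subset {L R : Set ℕ} (hR : R.Nonempty) (hRL : R ⊆ L)
    (hLR : ∀ m ∈ L, ∃ k ∈ R, k ≤ m) : sInf L = sInf R := by
  refine le_antisymm (Nat.sInf_le (hRL (Nat.sInf_mem hR))) ?_
  obtain ⟨k, hk, hkm⟩ := hLR _ (Nat.sInf_mem (hR.mono hRL))
  exact (Nat.sInf_le hk).trans hkm

/-- For `n ≥ 2` and a rank-`1` sandwich element `a ∈ T_n`, the degree of the variant
`T_n^a` equals `min { 2A + 3B + C + D : 0 ≤ A ≤ 2, B, D ≥ 0, C ≥ 2, 2^A·3^B·C ≥ n,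
C^D ≥ n^(n-1) }`. -/
theorem variant_degree_rank_one_formula (n : ℕ) (hn : 2 ≤ n) (a : Fin n → Fin n)
    (ha : trank a = 1) :
    variantDegree n a
      = sInf {k | ∃ A B C D : ℕ, A ≤ 2 ∧ 2 ≤ C ∧ n ≤ 2 ^ A * 3 ^ B * C ∧
          n ^ (n - 1) ≤ C ^ D ∧ k = 2 * A + 3 * B + C + D} := by
  obtain ⟨c, rfl⟩ := exists_eq_const_of_trank_eq_one ha
  rw [variantDegree_eq_sInf]
  refine Nat.sInf_eq_sInf_of_subset ⟨_, 0, 0, n, n - 1, by omega, hn, by simp, le_rfl, rfl⟩ ?_ ?_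
  · rintro k ⟨A, B, C, D, -, hC, hprod, hpow, rfl⟩
    exact ⟨by omega, exists_isVariantEmbedding_const c (by simpa using hprod) (by simpa using hpow)⟩
  · rintro m ⟨-, φ, hφ⟩
    obtain ⟨A, B, C, D, hA, hC, hprod, hpow, hm⟩ := hφ.exists_cost_le (by simpa using hn)
    exact ⟨_, ⟨A, B, C, D, hA, hC, by simpa using hprod, by simpa using hpow, rfl⟩,
      by simpa using hm⟩
end
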